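/- arXiv:2006.03739 — 7 statements merged into one kernel-verified Lean document; each statement's English description precedes it below -/
import Mathlib

section
/- Let G be a finite simple graph on n vertices with n ≥ 3, and let φ be an automorphism of the Mycielskian μ(G). If φ maps the root w to an original vertex of μ(G), then G has no dominating vertex. -/
open SimpleGraph

/-- The generalized Mycielskian `μ_t(G)`: levels `0,…,t` of copies of `V(G)`
plus a root `none`. Level-0 vertices are the original vertices. -/
def genMyc {V : Type*} (G : SimpleGraph V) (t : ℕ) :
    SimpleGraph (Option (Fin (t + 1) × V)) :=
  SimpleGraph.fromRel fun a b =>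
    match a, b with
    | some (s, i), some (s', j) =>
        ((s : ℕ) = 0 ∧ (s' : ℕ) = 0 ∧ G.Adj i j) ∨
        ((s' : ℕ) = (s : ℕ) + 1 ∧ G.Adj i j)
    | some (s, _), none => (s : ℕ) = t
    | _, _ => False

/-- The (traditional) Mycielskian `μ(G)`. -/
def myc {V : Type*} (G : SimpleGraph V) : SimpleGraph (Option (Fin 2 × V)) :=
  genMyc G 1

/-- The star `K_{1,m}` with center `0` and `m` leaves. -/
def starG (m : ℕ) : SimpleGraph (Fin (m + 1)) :=
  SimpleGraph.fromRel fun a _ => a = 0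

/-- A `d`-coloring is distinguishing if only the trivial automorphism preserves it. -/
def IsDistinguishing {V : Type*} (H : SimpleGraph V) (d : ℕ) (c : V → Fin d) : Prop :=
  ∀ φ : H ≃g H, (∀ v, c (φ v) = c v) → ∀ v, φ v = v

/-- The distinguishing number of a graph. -/
noncomputable def distNum {V : Type*} (H : SimpleGraph V) : ℕ :=
  sInf {d | ∃ c : V → Fin d, IsDistinguishing H d c}

/-! The root `w` of `μ(G)` has `n` neighbours, all of them shadow vertices, which are pairwise
non-adjacent; an original vertex `v_v` has `2 deg v` neighbours, among them `v_j` for every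
`j ∈ N(v)`. So if an automorphism sends `w` to `v_v`, then `n = 2 deg v` and `N(v)` is independent
in `G`. A dominating vertex `x` rules out both: if `v = x` then `n = 2 (n - 1)`, i.e. `n = 2`;
otherwise `x ∈ N(v)`, and `deg v = n / 2 ≥ 2` gives a second neighbour of `v`, adjacent to `x`. -/

namespace Myc

variable {V : Type*} {G : SimpleGraph V}

lemma adj_original_iff {v j : V} {s : Fin 2} :
    (myc G).Adj (some (0, v)) (some (s, j)) ↔ G.Adj v j := by
  constructor
  · rintro ⟨-, h | h⟩
    · rcases h with ⟨-, -, h⟩ | ⟨-, h⟩ <;> exact h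
    · rcases h with ⟨-, -, h⟩ | ⟨hs, -⟩
      · exact h.symm
      · simp at hs
  · intro hvj
    refine ⟨by simp [hvj.ne], Or.inl ?_⟩
    fin_cases s
    · exact Or.inl ⟨rfl, rfl, hvj⟩
    · exact Or.inr ⟨rfl, hvj⟩

lemma adj_root_iff {c : Option (Fin 2 × V)} :
    (myc G).Adj none c ↔ ∃ i, c = some (1, i) := by
  constructor
  · rintro ⟨hne, h | h⟩
    · exact absurd h (by simp)
    · match c with
      | none => simp at hne
      | some (s, i) =>
        have hs : s = 1 := Fin.ext h
        exact ⟨i, by rw [hs]⟩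
  · rintro ⟨i, rfl⟩
    exact ⟨by simp, Or.inr rfl⟩

lemma not_adj_shadow_shadow {i j : V} : ¬ (myc G).Adj (some (1, i)) (some (1, j)) := by
  rintro ⟨-, h | h⟩ <;> rcases h with ⟨h1, -⟩ | ⟨h1, -⟩ <;> simp at h1

lemma not_adj_root_of_adj_root {a b : Option (Fin 2 × V)} (ha : (myc G).Adj none a)
    (hb : (myc G).Adj none b) : ¬ (myc G).Adj a b := by
  obtain ⟨i, rfl⟩ := adj_root_iff.mp ha
  obtain ⟨j, rfl⟩ := adj_root_iff.mp hb
  exact not_adj_shadow_shadow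

noncomputable def neighborSetRootEquiv : V ≃ (myc G).neighborSet none :=
  Equiv.ofBijective (fun i => ⟨some (1, i), (adj_root_iff (G := G)).mpr ⟨i, rfl⟩⟩) <| by
    refine ⟨fun i j hij => by simpa using congrArg Subtype.val hij, ?_⟩
    rintro ⟨c, hc⟩
    obtain ⟨i, rfl⟩ := adj_root_iff.mp hc
    exact ⟨i, rfl⟩

noncomputable def neighborSetOriginalEquiv (v : V) :
    Fin 2 × G.neighborSet v ≃ (myc G).neighborSet (some (0, v)) :=
  Equiv.ofBijective (fun p => ⟨some (p.1, p.2.1), adj_original_iff.mpr p.2.2⟩) <| by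
    refine ⟨?_, ?_⟩
    · rintro ⟨s, j, hj⟩ ⟨s', j', hj'⟩ hp
      obtain ⟨rfl, rfl⟩ : s = s' ∧ j = j' := by simpa using congrArg Subtype.val hp
      rfl
    · rintro ⟨c, hc⟩
      match c with
      | none => exact absurd ((adj_root_iff (G := G)).mp hc.symm) (by simp)
      | some (s, j) => exact ⟨⟨s, j, adj_original_iff.mp hc⟩, rfl⟩

variable {φ : myc G ≃g myc G} {v : V}

lemma card_eq_two_mul_card_neighborSet_of_apply_root_eq (h : φ none = some (0, v)) :
    Nat.card V = 2 * Nat.card (G.neighborSet v) := by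
  rw [Nat.card_congr (neighborSetRootEquiv.trans (φ.mapNeighborSet none)), h,
    ← Nat.card_congr (neighborSetOriginalEquiv v), Nat.card_prod, Nat.card_fin]

lemma isIndepSet_neighborSet_of_apply_root_eq (h : φ none = some (0, v)) :
    G.IsIndepSet (G.neighborSet v) := by
  intro x hx j hj _ hxj
  have hroot : φ.symm (some (0, v)) = none := by rw [← h, φ.symm_apply_apply]
  have root_adj {k : V} (hk : G.Adj v k) : (myc G).Adj none (φ.symm (some (0, k))) := by
    rw [← hroot, φ.symm.map_adj_iff]
    exact adj_original_iff.mpr hk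
  exact not_adj_root_of_adj_root (root_adj hx) (root_adj hj)
    (φ.symm.map_adj_iff.mpr (adj_original_iff.mpr hxj))

end Myc

theorem stmt_0 {V : Type*} [Fintype V] (G : SimpleGraph V)
    (hn : 3 ≤ Fintype.card V) (φ : myc G ≃g myc G) (v : V)
    (h : φ none = some (0, v)) :
    ¬ ∃ x : V, ∀ y : V, y ≠ x → G.Adj x y := by
  rintro ⟨x, hx⟩
  have hcard := Myc.card_eq_two_mul_card_neighborSet_of_apply_root_eq h
  rw [Nat.card_eq_fintype_card, Nat.card_coe_set_eq] at hcard
  rcases eq_or_ne v x with rfl | hvx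
  · have hnbr : G.neighborSet v = {v}ᶜ :=
      Set.ext fun y => ⟨fun hy => hy.ne.symm, hx y⟩
    rw [hnbr, Set.ncard_compl, Set.ncard_singleton,
      Nat.card_eq_fintype_card] at hcard
    omega
  · obtain ⟨j, hj, hjx⟩ := Set.exists_ne_of_one_lt_ncard (s := G.neighborSet v) (by omega) x
    exact Myc.isIndepSet_neighborSet_of_apply_root_eq h (hx v hvx).symm hj hjx.symm
      (hx j hjx)
end

section
/- Let G be a finite simple graph with at least 3 vertices. Then no automorphism of the Mycielskian μ(G) maps the root w to an original vertex. -/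
open SimpleGraph

/-
Suppose an automorphism `φ` sends the root `w` to an original vertex `v`, and let `d` be the
degree function of `G`. Comparing degrees, `n = deg w = deg v = 2 d(v)`. The shadow `u_v` is the
image of an original vertex `k`: it is not `φ w`, and it is not the image of a shadow `u_k`,
since `u_k ~ w` would force `u_v ~ v`, i.e. a loop at `v`. Comparing degrees again gives
`d(v) + 1 = 2 d(k)`, and comparing the common neighbourhoods of the pairs `(k, w)` and
`(u_v, v)`, which are copies of `N(k)` and `N(v)`, gives `d(k) = d(v)`. Hence `d(v) = 1` and
`n = 2`.
-/

namespace SimpleGraph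

variable {V : Type*} {G : SimpleGraph V}

@[simp]
lemma myc_adj_some_some {s s' : Fin 2} {i j : V} :
    (myc G).Adj (some (s, i)) (some (s', j)) ↔ G.Adj i j ∧ (s = 0 ∨ s' = 0) := by
  simp only [myc, genMyc, fromRel_adj]
  fin_cases s <;> fin_cases s' <;> simp [G.adj_comm i j]
  exact fun h => h.ne'

@[simp]
lemma myc_adj_none_some {s : Fin 2} {i : V} : (myc G).Adj none (some (s, i)) ↔ s = 1 := by
  simp only [myc, genMyc, fromRel_adj]
  fin_cases s <;> simp

@[simp]
lemma myc_adj_some_none {s : Fin 2} {i : V} : (myc G).Adj (some (s, i)) none ↔ s = 1 := by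
  rw [adj_comm, myc_adj_none_some]

lemma myc_neighborSet_root : (myc G).neighborSet none = Set.range fun j => some (1, j) := by
  ext (_ | ⟨s, j⟩) <;> simp [eq_comm]

lemma myc_neighborSet_orig (v : V) :
    (myc G).neighborSet (some (0, v)) =
      (fun j => some (0, j)) '' G.neighborSet v ∪ (fun j => some (1, j)) '' G.neighborSet v := by
  ext (_ | ⟨s, j⟩) <;> [simp; fin_cases s <;> simp]

lemma myc_neighborSet_shadow (v : V) :
    (myc G).neighborSet (some (1, v)) =
      insert none ((fun j => some (0, j)) '' G.neighborSet v) := by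
  ext (_ | ⟨s, j⟩) <;> [simp; fin_cases s <;> simp [G.adj_comm v]]

lemma myc_commonNeighbors_orig_root (v : V) :
    (myc G).commonNeighbors (some (0, v)) none = (fun j => some (1, j)) '' G.neighborSet v := by
  ext (_ | ⟨s, j⟩) <;> [simp [commonNeighbors]; fin_cases s <;> simp [commonNeighbors]]

lemma myc_commonNeighbors_shadow_orig (v : V) :
    (myc G).commonNeighbors (some (1, v)) (some (0, v)) =
      (fun j => some (0, j)) '' G.neighborSet v := by
  ext (_ | ⟨s, j⟩) <;>
    [simp [commonNeighbors]; fin_cases s <;> simp [commonNeighbors, G.adj_comm v]]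

lemma some_prod_mk_injective (s : Fin 2) :
    Function.Injective fun j : V => (some (s, j) : Option (Fin 2 × V)) :=
  (Option.some_injective _).comp (Prod.mk_right_injective s)

lemma myc_ncard_neighborSet_root : ((myc G).neighborSet none).ncard = Nat.card V := by
  rw [myc_neighborSet_root, Set.ncard_range_of_injective (some_prod_mk_injective 1)]

lemma myc_ncard_neighborSet_orig [Finite V] (v : V) :
    ((myc G).neighborSet (some (0, v))).ncard = 2 * (G.neighborSet v).ncard := by
  rw [myc_neighborSet_orig, Set.ncard_union_eq, Set.ncard_image_of_injective _
    (some_prod_mk_injective 0), Set.ncard_image_of_injective _ (some_prod_mk_injective 1), two_mul]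
  rw [Set.disjoint_left]
  rintro _ ⟨i, -, rfl⟩ ⟨j, -, h⟩
  simp at h

lemma myc_ncard_neighborSet_shadow [Finite V] (v : V) :
    ((myc G).neighborSet (some (1, v))).ncard = (G.neighborSet v).ncard + 1 := by
  rw [myc_neighborSet_shadow, Set.ncard_insert_of_notMem (by simp),
    Set.ncard_image_of_injective _ (some_prod_mk_injective 0)]

lemma myc_ncard_commonNeighbors_orig_root (v : V) :
    ((myc G).commonNeighbors (some (0, v)) none).ncard = (G.neighborSet v).ncard := by
  rw [myc_commonNeighbors_orig_root, Set.ncard_image_of_injective _ (some_prod_mk_injective 1)]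

lemma myc_ncard_commonNeighbors_shadow_orig (v : V) :
    ((myc G).commonNeighbors (some (1, v)) (some (0, v))).ncard = (G.neighborSet v).ncard := by
  rw [myc_commonNeighbors_shadow_orig, Set.ncard_image_of_injective _ (some_prod_mk_injective 0)]

namespace Iso

variable {W : Type*} {G' : SimpleGraph W}

lemma ncard_neighborSet (φ : G ≃g G') (v : V) :
    (G'.neighborSet (φ v)).ncard = (G.neighborSet v).ncard := by
  rw [← φ.image_neighborSet, Set.ncard_image_of_injective _ φ.injective]

lemma ncard_commonNeighbors (φ : G ≃g G') (v w : V) :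
    (G'.commonNeighbors (φ v) (φ w)).ncard = (G.commonNeighbors v w).ncard := by
  rw [commonNeighbors_eq, commonNeighbors_eq, ← φ.image_neighborSet, ← φ.image_neighborSet,
    ← Set.image_inter φ.injective, Set.ncard_image_of_injective _ φ.injective]

end Iso

lemma myc_exists_orig_apply_eq_shadow {φ : myc G ≃g myc G} {v : V}
    (hφ : φ none = some (0, v)) :
    ∃ k, φ (some (0, k)) = some (1, v) := by
  obtain ⟨x, hx⟩ := φ.surjective (some (1, v))
  match x with
  | none => simp [hφ] at hx
  | some (0, k) => exact ⟨k, hx⟩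
  | some (1, k) =>
    have h := φ.map_adj_iff.mpr (myc_adj_none_some.mpr rfl : (myc G).Adj none (some (1, k)))
    rw [hφ, hx, myc_adj_some_some] at h
    exact (G.loopless.irrefl v h.1).elim

end SimpleGraph

theorem stmt_1 {V : Type*} [Fintype V] (G : SimpleGraph V)
    (hn : 3 ≤ Fintype.card V) :
    ∀ φ : myc G ≃g myc G, ∀ v : V, φ none ≠ some (0, v) := by
  intro φ v hφ
  obtain ⟨k, hk⟩ := myc_exists_orig_apply_eq_shadow hφ
  have h_root := φ.ncard_neighborSet none
  rw [hφ, myc_ncard_neighborSet_orig, myc_ncard_neighborSet_root,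
    Nat.card_eq_fintype_card] at h_root
  have h_orig := φ.ncard_neighborSet (some (0, k))
  rw [hk, myc_ncard_neighborSet_shadow, myc_ncard_neighborSet_orig] at h_orig
  have h_common := φ.ncard_commonNeighbors (some (0, k)) none
  rw [hk, hφ, myc_ncard_commonNeighbors_shadow_orig,
    myc_ncard_commonNeighbors_orig_root] at h_common
  omega
end

section
/- If G is a disconnected finite simple graph and φ is an automorphism of the generalized Mycielskian μ_t(G) (for any t ≥ 1), then φ fixes the root w. -/
/-!
The root `w` is the only vertex of `μ_t(G)` whose deletion disconnects two of its neighbours, and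
this property is invariant under automorphisms. Deleting `w` leaves a graph that maps onto `G` by
`u_i^s ↦ v_i`, so the copies `u_i^t, u_j^t` of two vertices in different components of `G` become
disconnected. For any other vertex `u_k^σ` and neighbour `u_j^ρ`, we have `j ~ k` in `G`, and the
copies of `j` and `k` together with `w` form the odd cycle
`w, u_j^t, u_k^{t-1}, …, u^0, u^0, …, u_k^t, w`; deleting `u_k^σ` from it leaves a path joining
`u_j^ρ` to `w`.
-/

open SimpleGraph

namespace SimpleGraph

variable {α β : Type*} {H : SimpleGraph α} {H' : SimpleGraph β}

theorem reachable_of_adj_succ {c : ℕ → α} {m n : ℕ} (hmn : m ≤ n)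
    (hc : ∀ k, m ≤ k → k < n → H.Adj (c k) (c (k + 1))) : H.Reachable (c m) (c n) := by
  induction n, hmn using Nat.le_induction with
  | base => rfl
  | succ n hmn ih =>
    exact (ih fun k hk hkn ↦ hc k hk (by omega)).trans (hc n hmn n.lt_succ_self).reachable

theorem reachable_deleteIncidenceSet_of_adj_succ {c : ℕ → α} {v : α} {m n : ℕ} (hmn : m ≤ n)
    (hc : ∀ k, m ≤ k → k < n → H.Adj (c k) (c (k + 1))) (hv : ∀ k, m ≤ k → k ≤ n → c k ≠ v) :
    (H.deleteIncidenceSet v).Reachable (c m) (c n) :=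
  reachable_of_adj_succ hmn fun k hk hkn ↦
    deleteIncidenceSet_adj.mpr ⟨hc k hk hkn, hv k hk hkn.le, hv (k + 1) (by omega) hkn⟩

def SeparatesNeighbors (H : SimpleGraph α) (v : α) : Prop :=
  ∃ a b, H.Adj v a ∧ H.Adj v b ∧ ¬ (H.deleteIncidenceSet v).Reachable a b

theorem SeparatesNeighbors.iso {v : α} (h : H.SeparatesNeighbors v) (φ : H ≃g H') :
    H'.SeparatesNeighbors (φ v) := by
  obtain ⟨a, b, ha, hb, hab⟩ := h
  refine ⟨φ a, φ b, φ.map_adj_iff.mpr ha, φ.map_adj_iff.mpr hb, fun hφ ↦ hab ?_⟩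
  let ψ : H'.deleteIncidenceSet (φ v) →g H.deleteIncidenceSet v :=
    ⟨φ.symm, fun {x y} hxy ↦ by
      rw [deleteIncidenceSet_adj] at hxy ⊢
      refine ⟨φ.symm.map_adj_iff.mpr hxy.1, ?_, ?_⟩ <;> rw [Ne, φ.symm_apply_eq] <;> tauto⟩
  simpa [ψ] using hφ.map ψ

theorem not_separatesNeighbors_of_forall_reachable {v r : α}
    (h : ∀ a, H.Adj v a → (H.deleteIncidenceSet v).Reachable a r) :
    ¬ H.SeparatesNeighbors v :=
  fun ⟨a, b, ha, hb, hab⟩ ↦ hab ((h a ha).trans (h b hb).symm)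

end SimpleGraph

section Mycielskian

variable {V : Type*} {G : SimpleGraph V} {t : ℕ}

theorem genMyc_adj_some_some {s s' : Fin (t + 1)} {i j : V} :
    (genMyc G t).Adj (some (s, i)) (some (s', j)) ↔
      G.Adj i j ∧ ((s = 0 ∧ s' = 0) ∨ (s' : ℕ) = s + 1 ∨ (s : ℕ) = s' + 1) := by
  rw [genMyc, fromRel_adj]
  constructor
  · rintro ⟨-, (⟨h0, h0', h⟩ | ⟨hs, h⟩) | (⟨h0', h0, h⟩ | ⟨hs, h⟩)⟩
    · exact ⟨h, Or.inl ⟨Fin.ext h0, Fin.ext h0'⟩⟩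
    · exact ⟨h, Or.inr (Or.inl hs)⟩
    · exact ⟨h.symm, Or.inl ⟨Fin.ext h0, Fin.ext h0'⟩⟩
    · exact ⟨h.symm, Or.inr (Or.inr hs)⟩
  · rintro ⟨h, ⟨rfl, rfl⟩ | hs | hs⟩
    · exact ⟨by simp [h.ne], Or.inl (Or.inl ⟨rfl, rfl, h⟩)⟩
    · exact ⟨by simp [h.ne], Or.inl (Or.inr ⟨hs, h⟩)⟩
    · exact ⟨by simp [h.ne], Or.inr (Or.inr ⟨hs, h.symm⟩)⟩

theorem genMyc_adj_some_none {s : Fin (t + 1)} {i : V} :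
    (genMyc G t).Adj (some (s, i)) none ↔ s = Fin.last t := by
  rw [genMyc, fromRel_adj]
  simp [Fin.ext_iff]

namespace genMyc

def cycleLevel (t n : ℕ) : ℕ := if n ≤ t then t - n else n - (t + 1)

/-- For `x ~ y` in `G`, the vertices `edgeCycle t x y 0, …, edgeCycle t x y (2 * t + 1)` run down
from `(t, x)` to level `0` alternating between copies of `x` and `y`, cross the edge `xy` at
level `0` and run back up to `(t, y)`; with the root they form an odd cycle. Indices beyond
`2 * t + 1` are junk (`Fin.ofNat` wraps the level around). -/
def edgeCycle (t : ℕ) (x y : V) (n : ℕ) : Option (Fin (t + 1) × V) :=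
  some (Fin.ofNat (t + 1) (cycleLevel t n), if Even n then x else y)

variable {x y : V}

theorem val_ofNat_cycleLevel {n : ℕ} (hn : n ≤ 2 * t + 1) :
    (Fin.ofNat (t + 1) (cycleLevel t n) : ℕ) = cycleLevel t n := by
  rw [Fin.val_ofNat, Nat.mod_eq_of_lt]
  unfold cycleLevel
  split_ifs <;> omega

theorem exists_cycleLevel_eq {s : ℕ} (hs : s ≤ t) (e : ℕ) :
    ∃ n ≤ 2 * t + 1, cycleLevel t n = s ∧ n % 2 = e % 2 := by
  by_cases h : (t - s) % 2 = e % 2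
  · exact ⟨t - s, by omega, by simp only [cycleLevel]; split_ifs <;> omega, h⟩
  · exact ⟨t + 1 + s, by omega, by simp only [cycleLevel]; split_ifs <;> omega, by omega⟩

theorem edgeCycle_zero : edgeCycle t x y 0 = some (Fin.last t, x) := by
  simp [edgeCycle, cycleLevel]

theorem edgeCycle_last : edgeCycle t x y (2 * t + 1) = some (Fin.last t, y) := by
  have hlevel : cycleLevel t (2 * t + 1) = t := by
    simp only [cycleLevel]
    split_ifs <;> omega
  simp [edgeCycle, hlevel]

theorem edgeCycle_adj_succ (hxy : G.Adj x y) {n : ℕ} (hn : n < 2 * t + 1) :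
    (genMyc G t).Adj (edgeCycle t x y n) (edgeCycle t x y (n + 1)) := by
  rw [edgeCycle, edgeCycle, genMyc_adj_some_some]
  refine ⟨?_, ?_⟩
  · by_cases h : Even n <;> simp [Nat.even_add_one, h, hxy, hxy.symm]
  · simp only [Fin.ext_iff, val_ofNat_cycleLevel hn.le, val_ofNat_cycleLevel hn, Fin.val_zero]
    unfold cycleLevel
    split_ifs <;> omega

theorem edgeCycle_injOn (hxy : x ≠ y) : Set.InjOn (edgeCycle t x y) (Set.Iic (2 * t + 1)) := by
  intro m hm n hn h
  simp only [edgeCycle, Option.some.injEq, Prod.mk.injEq, Fin.ext_iff, val_ofNat_cycleLevel hm,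
    val_ofNat_cycleLevel hn] at h
  obtain ⟨hlevel, hside⟩ := h
  have hparity : m % 2 = 0 ↔ n % 2 = 0 := by
    by_cases hm' : Even m <;> by_cases hn' : Even n <;> simp_all [Nat.even_iff]
  simp only [cycleLevel, Set.mem_Iic] at hlevel hm hn
  split_ifs at hlevel <;> omega

theorem exists_edgeCycle_eq_left (s : Fin (t + 1)) :
    ∃ n ≤ 2 * t + 1, edgeCycle t x y n = some (s, x) := by
  obtain ⟨n, hn, hs, he⟩ := exists_cycleLevel_eq s.is_le 0
  have hlevel : Fin.ofNat (t + 1) (cycleLevel t n) = s :=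
    Fin.ext ((val_ofNat_cycleLevel hn).trans hs)
  exact ⟨n, hn, by rw [edgeCycle, hlevel, if_pos (Nat.even_iff.mpr he)]⟩

theorem exists_edgeCycle_eq_right (s : Fin (t + 1)) :
    ∃ n ≤ 2 * t + 1, edgeCycle t x y n = some (s, y) := by
  obtain ⟨n, hn, hs, he⟩ := exists_cycleLevel_eq s.is_le 1
  have hlevel : Fin.ofNat (t + 1) (cycleLevel t n) = s :=
    Fin.ext ((val_ofNat_cycleLevel hn).trans hs)
  exact ⟨n, hn, by rw [edgeCycle, hlevel, if_neg (by rw [Nat.even_iff]; omega)]⟩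

end genMyc

open genMyc in
theorem genMyc_reachable_none_of_adj {σ : Fin (t + 1)} {k : V} {a : Option (Fin (t + 1) × V)}
    (ha : (genMyc G t).Adj (some (σ, k)) a) :
    ((genMyc G t).deleteIncidenceSet (some (σ, k))).Reachable a none := by
  obtain _ | ⟨ρ, j⟩ := a
  · rfl
  have hjk : G.Adj j k := (genMyc_adj_some_some.mp ha).1.symm
  obtain ⟨m, hm, hcm⟩ := exists_edgeCycle_eq_right (x := j) (y := k) σ
  obtain ⟨n, hn, hcn⟩ := exists_edgeCycle_eq_left (x := j) (y := k) ρ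
  have hc : ∀ i < 2 * t + 1, (genMyc G t).Adj (edgeCycle t j k i) (edgeCycle t j k (i + 1)) :=
    fun i hi ↦ edgeCycle_adj_succ hjk hi
  have hv : ∀ i ≤ 2 * t + 1, i ≠ m → edgeCycle t j k i ≠ some (σ, k) := fun i hi him h ↦
    him (edgeCycle_injOn hjk.ne (Set.mem_Iic.mpr hi) (Set.mem_Iic.mpr hm) (h.trans hcm.symm))
  have hnm : n ≠ m := by
    rintro rfl
    exact ha.ne (hcm.symm.trans hcn)
  rw [← hcn]
  rcases hnm.lt_or_gt with hnm | hmn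
  · have hroot : ((genMyc G t).deleteIncidenceSet (some (σ, k))).Adj (edgeCycle t j k 0) none :=
      deleteIncidenceSet_adj.mpr ⟨edgeCycle_zero ▸ genMyc_adj_some_none.mpr rfl,
        hv 0 (by omega) (by omega), by simp⟩
    exact (reachable_deleteIncidenceSet_of_adj_succ (Nat.zero_le n)
      (fun i _ hi ↦ hc i (by omega)) (fun i _ hi ↦ hv i (by omega) (by omega))).symm.trans
      hroot.reachable
  · have hroot : ((genMyc G t).deleteIncidenceSet (some (σ, k))).Adj
        (edgeCycle t j k (2 * t + 1)) none :=
      deleteIncidenceSet_adj.mpr ⟨edgeCycle_last ▸ genMyc_adj_some_none.mpr rfl,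
        hv _ le_rfl (by omega), by simp⟩
    exact (reachable_deleteIncidenceSet_of_adj_succ hn
      (fun i _ hi ↦ hc i hi) (fun i hi hi' ↦ hv i hi' (by omega))).trans hroot.reachable

theorem genMyc_not_separatesNeighbors_some (v : Fin (t + 1) × V) :
    ¬ (genMyc G t).SeparatesNeighbors (some v) :=
  not_separatesNeighbors_of_forall_reachable fun _ ↦ genMyc_reachable_none_of_adj

theorem reachable_of_genMyc_deleteIncidenceSet_none [Nonempty V] {s s' : Fin (t + 1)} {i j : V}
    (h : ((genMyc G t).deleteIncidenceSet none).Reachable (some (s, i)) (some (s', j))) :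
    G.Reachable i j := by
  let π : (genMyc G t).deleteIncidenceSet none →g G :=
    ⟨fun a ↦ a.elim (Classical.arbitrary V) Prod.snd, fun {a b} hab ↦ by
      obtain ⟨hab, ha, hb⟩ := deleteIncidenceSet_adj.mp hab
      obtain _ | ⟨_, _⟩ := a
      · exact absurd rfl ha
      obtain _ | ⟨_, _⟩ := b
      · exact absurd rfl hb
      exact (genMyc_adj_some_some.mp hab).1⟩
  exact h.map π

theorem genMyc_separatesNeighbors_none [Nonempty V] (hG : ¬ G.Preconnected) :
    (genMyc G t).SeparatesNeighbors none := by
  obtain ⟨i, j, hij⟩ : ∃ i j, ¬ G.Reachable i j := by simpa [Preconnected] using hG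
  have hroot (k : V) : (genMyc G t).Adj none (some (Fin.last t, k)) :=
    (genMyc_adj_some_none.mpr rfl).symm
  exact ⟨_, _, hroot i, hroot j, fun h ↦ hij (reachable_of_genMyc_deleteIncidenceSet_none h)⟩

end Mycielskian

theorem stmt_4_general {V : Type*} [Nonempty V] (G : SimpleGraph V)
    (hG : ¬ G.Connected) (t : ℕ)
    (φ : genMyc G t ≃g genMyc G t) :
    φ none = none := by
  have hroot : (genMyc G t).SeparatesNeighbors (φ none) :=
    (genMyc_separatesNeighbors_none fun h ↦ hG ⟨h⟩).iso φ
  cases hφ : φ none with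
  | none => rfl
  | some v => exact absurd (hφ ▸ hroot) (genMyc_not_separatesNeighbors_some v)

theorem stmt_4 {V : Type*} [Fintype V] [Nonempty V] (G : SimpleGraph V)
    (hG : ¬ G.Connected) (t : ℕ) (ht : 1 ≤ t)
    (φ : genMyc G t ≃g genMyc G t) :
    φ none = none :=
  stmt_4_general G hG t φ
end

section
/- If there is an automorphism φ of μ_t(G) taking the root w to a shadow vertex at level t, then G = K_{1,m} for some m ≥ 0. Additionally, if G does not have exactly 2 vertices, then φ(w) is the level-t shadow of the unique vertex of maximum degree in G. -/
open SimpleGraph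

section aux
variable {V : Type*} (G : SimpleGraph V) (t : ℕ)

lemma adj_ss (p q : Fin (t+1)) (i j : V) :
    (genMyc G t).Adj (some (p,i)) (some (q,j)) ↔
      (p,i) ≠ (q,j) ∧ (((p:ℕ)=0 ∧ (q:ℕ)=0 ∧ G.Adj i j) ∨ ((q:ℕ)=(p:ℕ)+1 ∧ G.Adj i j)
        ∨ ((q:ℕ)=0 ∧ (p:ℕ)=0 ∧ G.Adj j i) ∨ ((p:ℕ)=(q:ℕ)+1 ∧ G.Adj j i)) := by
  simp [genMyc, fromRel_adj]; tauto

lemma adj_n (p : Fin (t+1)) (i : V) :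
    (genMyc G t).Adj none (some (p,i)) ↔ (p:ℕ) = t := by
  simp [genMyc, fromRel_adj]

lemma nat_card_option (α : Type*) [Finite α] : Nat.card (Option α) = Nat.card α + 1 := by
  have := Fintype.ofFinite α
  simp [Nat.card_eq_fintype_card]

variable [Fintype V] [DecidableRel G.Adj]

omit [DecidableRel G.Adj] in
lemma cardN_none : Nat.card ((genMyc G t).neighborSet none) = Fintype.card V := by
  have hb : Function.Bijective
      (fun i : V => (⟨some (⟨t, Nat.lt_succ_self t⟩, i), by
        rw [mem_neighborSet, adj_n]⟩ : (genMyc G t).neighborSet none)) := by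
    constructor
    · intro a b hab
      simpa using hab
    · rintro ⟨z, hz⟩
      match z with
      | none => exact absurd hz ((genMyc G t).irrefl)
      | some (p, i) =>
        refine ⟨i, ?_⟩
        rw [mem_neighborSet, adj_n] at hz
        exact Subtype.ext (by simp [Fin.ext_iff, hz])
  rw [← Nat.card_eq_fintype_card]
  exact (Nat.card_congr (Equiv.ofBijective _ hb)).symm

lemma cardN_top (ht : 1 ≤ t) (σ : Fin (t+1)) (hσ : (σ:ℕ) = t) (i : V) :
    Nat.card ((genMyc G t).neighborSet (some (σ, i))) = G.degree i + 1 := by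
  classical
  set σ' : Fin (t+1) := ⟨t-1, by omega⟩ with hσ'
  have hb : Function.Bijective
      (fun z : Option (G.neighborSet i) =>
        (match z with
          | none => ⟨none, by
              rw [mem_neighborSet]
              exact ((genMyc G t).adj_symm (by rw [adj_n]; exact hσ))⟩
          | some ⟨j, hj⟩ => ⟨some (σ', j), by
              rw [mem_neighborSet, adj_ss]
              refine ⟨?_, Or.inr (Or.inr (Or.inr ⟨by simp [hσ, hσ']; omega, hj.symm⟩))⟩
              simp [Fin.ext_iff, hσ, hσ', Prod.ext_iff]
              omega⟩ : (genMyc G t).neighborSet (some (σ, i)))) := by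
    constructor
    · rintro (_|⟨j,hj⟩) (_|⟨k,hk⟩) hab <;> simp_all
    · rintro ⟨z, hz⟩
      match z with
      | none => exact ⟨none, rfl⟩
      | some (q, j) =>
        rw [mem_neighborSet, adj_ss] at hz
        obtain ⟨hne, h1 | h2 | h3 | h4⟩ := hz
        · omega
        · omega
        · omega
        · refine ⟨some ⟨j, h4.2.symm⟩, Subtype.ext ?_⟩
          simp [Fin.ext_iff, hσ']
          omega
  rw [Nat.card_congr (Equiv.ofBijective _ hb).symm, nat_card_option,
    Nat.card_eq_fintype_card, card_neighborSet_eq_degree]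

lemma cardN_mid (ht : 1 ≤ t) (p : Fin (t+1)) (hp : (p:ℕ) + 1 = t) (j : V) :
    Nat.card ((genMyc G t).neighborSet (some (p, j))) = 2 * G.degree j := by
  classical
  obtain ⟨top, htopv⟩ : ∃ q : Fin (t+1), (q:ℕ) = t := ⟨⟨t, Nat.lt_succ_self t⟩, rfl⟩
  obtain ⟨dd, hdval⟩ : ∃ q : Fin (t+1), (t = 1 ∧ (q:ℕ) = 0) ∨ (2 ≤ t ∧ (q:ℕ) + 2 = t) := by
    by_cases h : t = 1
    · exact ⟨⟨0, by omega⟩, Or.inl ⟨h, rfl⟩⟩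
    · exact ⟨⟨t-2, by omega⟩, Or.inr ⟨by omega, show t - 2 + 2 = t by omega⟩⟩
  have hmem : ∀ (b : Bool) (k : V), G.Adj j k →
      (genMyc G t).Adj (some (p, j)) (some ((if b then top else dd), k)) := by
    intro b k hk
    cases b
    · show (genMyc G t).Adj (some (p, j)) (some (dd, k))
      rw [adj_ss]
      constructor
      · simp only [Ne, Prod.mk.injEq, not_and]
        exact fun _ hjk => G.ne_of_adj hk hjk
      · rcases hdval with ⟨h1, h0⟩ | ⟨h2, h0⟩
        · exact Or.inl ⟨by omega, by omega, hk⟩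
        · exact Or.inr (Or.inr (Or.inr ⟨by omega, hk.symm⟩))
    · show (genMyc G t).Adj (some (p, j)) (some (top, k))
      rw [adj_ss]
      refine ⟨?_, Or.inr (Or.inl ⟨by omega, hk⟩)⟩
      simp only [Ne, Prod.mk.injEq, Fin.ext_iff, not_and]
      intro hpd hjk; omega
  have hb : Function.Bijective
      (fun z : Bool × (G.neighborSet j) =>
        (⟨some ((if z.1 then top else dd), z.2.1), hmem z.1 z.2.1 z.2.2⟩ :
          (genMyc G t).neighborSet (some (p, j)))) := by
    constructor
    · rintro ⟨b, k, hk⟩ ⟨b', k', hk'⟩ hab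
      have hab' := Subtype.ext_iff.mp hab
      rw [Option.some_inj, Prod.ext_iff] at hab'
      have hk2 : k = k' := hab'.2
      have hb2 : b = b' := by
        by_contra hbb
        have hval := congrArg Fin.val hab'.1
        cases b <;> cases b' <;> simp at hbb hval <;> omega
      subst hb2; subst hk2; rfl
    · rintro ⟨z, hz⟩
      match z with
      | none =>
        rw [mem_neighborSet] at hz
        have := ((genMyc G t).adj_symm hz)
        rw [adj_n] at this; omega
      | some (q, k) =>
        rw [mem_neighborSet, adj_ss] at hz
        obtain ⟨hne, h1 | h2 | h3 | h4⟩ := hz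
        · refine ⟨⟨false, ⟨k, h1.2.2⟩⟩, Subtype.ext ?_⟩
          show some (dd, k) = some (q, k)
          have hqd : dd = q := Fin.ext (by omega)
          rw [hqd]
        · refine ⟨⟨true, ⟨k, h2.2⟩⟩, Subtype.ext ?_⟩
          show some (top, k) = some (q, k)
          have hqd : top = q := Fin.ext (by omega)
          rw [hqd]
        · refine ⟨⟨false, ⟨k, h3.2.2.symm⟩⟩, Subtype.ext ?_⟩
          show some (dd, k) = some (q, k)
          have hqd : dd = q := Fin.ext (by omega)
          rw [hqd]
        · refine ⟨⟨false, ⟨k, h4.2.symm⟩⟩, Subtype.ext ?_⟩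
          show some (dd, k) = some (q, k)
          have hqd : dd = q := Fin.ext (by omega)
          rw [hqd]
  rw [Nat.card_congr (Equiv.ofBijective _ hb).symm, Nat.card_eq_fintype_card,
    Fintype.card_prod, Fintype.card_bool, card_neighborSet_eq_degree]

end aux

theorem stmt_8 {V : Type*} [Fintype V] (G : SimpleGraph V) [DecidableRel G.Adj]
    (t : ℕ) (ht : 1 ≤ t) (φ : genMyc G t ≃g genMyc G t)
    (s : Fin (t + 1)) (v : V) (hs : (s : ℕ) = t) (h : φ none = some (s, v)) :
    (∃ m : ℕ, Nonempty (G ≃g starG m)) ∧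
    (Fintype.card V ≠ 2 → ∀ y : V, y ≠ v → G.degree y < G.degree v) := by
  classical
  have hnpos : 0 < Fintype.card V := Fintype.card_pos_iff.mpr ⟨v⟩
  have hdeg : ∀ a, Nat.card ((genMyc G t).neighborSet a)
      = Nat.card ((genMyc G t).neighborSet (φ a)) :=
    fun a => Nat.card_congr (φ.mapNeighborSet a)
  -- degree of v
  have hdv : G.degree v + 1 = Fintype.card V := by
    have h0 := hdeg none
    rw [h, cardN_none, cardN_top G t ht s hs v] at h0
    omega
  -- the vertex x with φ (some (s,x)) = none
  obtain ⟨x, hx⟩ : ∃ x : V, φ (some (s, x)) = none := by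
    have h1 : φ.symm (some (s, v)) = none := by
      rw [← h]; exact φ.toEquiv.symm_apply_apply none
    have h2 : (genMyc G t).Adj (φ.symm none) (φ.symm (some (s, v))) :=
      φ.symm.map_adj_iff.mpr (by rw [adj_n]; exact hs)
    rw [h1] at h2
    have h3 := (genMyc G t).adj_symm h2
    match hz : φ.symm none with
    | none => rw [hz] at h3; exact absurd h3 ((genMyc G t).irrefl)
    | some (p, x) =>
      rw [hz, adj_n] at h3
      have hps : p = s := Fin.ext (by omega)
      subst hps
      exact ⟨x, by rw [← hz]; exact φ.toEquiv.apply_symm_apply none⟩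
  -- degree of x
  have hdx : G.degree x + 1 = Fintype.card V := by
    have h0 := hdeg (some (s, x))
    rw [hx, cardN_none, cardN_top G t ht s hs x] at h0
    omega
  -- v is dominating
  have hdom : ∀ y, y ≠ v → G.Adj v y := by
    have hsub : G.neighborFinset v ⊆ Finset.univ.erase v := by
      intro y hy
      rw [mem_neighborFinset] at hy
      exact Finset.mem_erase.mpr ⟨(G.ne_of_adj hy).symm, Finset.mem_univ y⟩
    have hcards : (Finset.univ.erase v).card ≤ (G.neighborFinset v).card := by
      rw [Finset.card_erase_of_mem (Finset.mem_univ v), Finset.card_univ,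
        card_neighborFinset_eq_degree]
      omega
    have heq := Finset.eq_of_subset_of_card_le hsub hcards
    intro y hy
    have : y ∈ G.neighborFinset v := by
      rw [heq]; exact Finset.mem_erase.mpr ⟨hy, Finset.mem_univ y⟩
    rwa [mem_neighborFinset] at this
  -- the down-shift map
  set s' : Fin (t+1) := ⟨t-1, by omega⟩ with hs'
  have hstep : ∀ i : V, i ≠ x → ∃ j : V, G.Adj v j ∧ φ (some (s, i)) = some (s', j) := by
    intro i hi
    have hadj2 : (genMyc G t).Adj (some (s, v)) (φ (some (s, i))) := by
      rw [← h]; exact φ.map_adj_iff.mpr (by rw [adj_n]; exact hs)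
    match hz : φ (some (s, i)) with
    | none =>
      exact absurd (φ.injective (hz.trans hx.symm)) (by simp [hi])
    | some (q, j) =>
      rw [hz, adj_ss] at hadj2
      obtain ⟨hne, h1 | h2 | h3 | h4⟩ := hadj2
      · omega
      · have := q.isLt; omega
      · omega
      · refine ⟨j, h4.2.symm, ?_⟩
        have : q = s' := Fin.ext (by simp [hs']; omega)
        rw [this]
  have hs't : (s' : ℕ) + 1 = t := by simp [hs']; omega
  set ψ : V → V := fun i => (φ (some (s, i))).elim v Prod.snd with hψ
  have hψx : ψ x = v := by simp [hψ, hx]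
  have hψval : ∀ i, i ≠ x → G.Adj v (ψ i) ∧ φ (some (s, i)) = some (s', ψ i) := by
    intro i hi
    obtain ⟨j, hj1, hj2⟩ := hstep i hi
    have : ψ i = j := by simp [hψ, hj2]
    rw [this]; exact ⟨hj1, hj2⟩
  have hψdeg : ∀ i, i ≠ x → G.degree i + 1 = 2 * G.degree (ψ i) := by
    intro i hi
    have h0 := hdeg (some (s, i))
    rw [(hψval i hi).2, cardN_top G t ht s hs i, cardN_mid G t ht s' hs't (ψ i)] at h0
    exact h0
  have hψinj : Function.Injective ψ := by
    intro a b hab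
    by_cases ha : a = x <;> by_cases hb : b = x
    · rw [ha, hb]
    · subst ha
      rw [hψx] at hab
      exact absurd (hab ▸ (hψval b hb).1) (G.irrefl)
    · subst hb
      rw [hψx] at hab
      exact absurd (hab ▸ (hψval a ha).1) (G.irrefl)
    · have h1 := (hψval a ha).2
      have h2 := (hψval b hb).2
      rw [hab] at h1
      have h3 := φ.injective (h1.trans h2.symm)
      simpa using h3
  -- image of erase x is erase v
  have himg : (Finset.univ.erase x).image ψ = Finset.univ.erase v := by
    apply Finset.eq_of_subset_of_card_le
    · intro y hy
      obtain ⟨i, hi, rfl⟩ := Finset.mem_image.mp hy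
      have hi' := (Finset.mem_erase.mp hi).1
      exact Finset.mem_erase.mpr ⟨(G.ne_of_adj (hψval i hi').1).symm, Finset.mem_univ _⟩
    · rw [Finset.card_image_of_injective _ hψinj,
        Finset.card_erase_of_mem (Finset.mem_univ v),
        Finset.card_erase_of_mem (Finset.mem_univ x)]
  -- the sum identity
  have hsum : ∑ i ∈ Finset.univ.erase x, (G.degree i + 1)
      = ∑ j ∈ Finset.univ.erase v, 2 * G.degree j := by
    rw [← himg, Finset.sum_image (fun a _ b _ hab => hψinj hab)]
    exact Finset.sum_congr rfl fun i hi => hψdeg i (Finset.mem_erase.mp hi).1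
  have hAx : (∑ i ∈ Finset.univ.erase x, G.degree i) + G.degree x
      = ∑ i, G.degree i := Finset.sum_erase_add _ _ (Finset.mem_univ x)
  have hAv : (∑ i ∈ Finset.univ.erase v, G.degree i) + G.degree v
      = ∑ i, G.degree i := Finset.sum_erase_add _ _ (Finset.mem_univ v)
  have hcx : (Finset.univ.erase x).card = Fintype.card V - 1 := by
    rw [Finset.card_erase_of_mem (Finset.mem_univ x), Finset.card_univ]
  have hcv : (Finset.univ.erase v).card = Fintype.card V - 1 := by
    rw [Finset.card_erase_of_mem (Finset.mem_univ v), Finset.card_univ]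
  have hB : ∑ j ∈ Finset.univ.erase v, G.degree j = Fintype.card V - 1 := by
    have e1 : ∑ i ∈ Finset.univ.erase x, (G.degree i + 1)
        = (∑ i ∈ Finset.univ.erase x, G.degree i) + (Fintype.card V - 1) := by
      rw [Finset.sum_add_distrib, Finset.sum_const, smul_eq_mul, mul_one, hcx]
    have e2 : ∑ j ∈ Finset.univ.erase v, 2 * G.degree j
        = 2 * ∑ j ∈ Finset.univ.erase v, G.degree j := by
      rw [Finset.mul_sum]
    rw [e1, e2] at hsum
    omega
  -- every non-center vertex has degree 1
  have hpos1 : ∀ i, i ≠ v → 1 ≤ G.degree i := by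
    intro i hi
    rw [← card_neighborFinset_eq_degree, Nat.succ_le_iff, Finset.card_pos]
    exact ⟨v, (G.mem_neighborFinset i v).mpr (hdom i hi).symm⟩
  have hleaf : ∀ y, y ≠ v → G.degree y = 1 := by
    intro y hy
    by_contra hne1
    have h2 : 2 ≤ G.degree y := by
      have := hpos1 y hy; omega
    have hlt : ∑ j ∈ Finset.univ.erase v, (fun (_ : V) => 1) j
        < ∑ j ∈ Finset.univ.erase v, G.degree j := by
      apply Finset.sum_lt_sum
      · intro i hi
        exact hpos1 i (Finset.mem_erase.mp hi).1
      · exact ⟨y, Finset.mem_erase.mpr ⟨hy, Finset.mem_univ y⟩, h2⟩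
    rw [Finset.sum_const, smul_eq_mul, mul_one, hcv, hB] at hlt
    omega
  -- adjacency characterization of G
  have hchar : ∀ a b : V, G.Adj a b ↔ a ≠ b ∧ (a = v ∨ b = v) := by
    intro a b
    constructor
    · intro hab
      refine ⟨G.ne_of_adj hab, ?_⟩
      by_contra hcon
      push_neg at hcon
      obtain ⟨hav, hbv⟩ := hcon
      have hsub2 : ({v, b} : Finset V) ⊆ G.neighborFinset a := by
        intro z hz
        rw [Finset.mem_insert, Finset.mem_singleton] at hz
        rw [mem_neighborFinset]
        rcases hz with rfl | rfl
        · exact (hdom a hav).symm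
        · exact hab
      have hc2 : ({v, b} : Finset V).card = 2 := by
        rw [Finset.card_insert_of_notMem (by simpa using Ne.symm hbv),
          Finset.card_singleton]
      have := Finset.card_le_card hsub2
      rw [hc2, card_neighborFinset_eq_degree, hleaf a hav] at this
      omega
    · rintro ⟨hne, rfl | rfl⟩
      · exact hdom b hne.symm
      · exact (hdom a hne).symm
  refine ⟨⟨Fintype.card V - 1, ?_⟩, ?_⟩
  · -- construct the isomorphism with the star
    have hn1 : Fintype.card V = (Fintype.card V - 1) + 1 := by omega
    let e1 : V ≃ Fin ((Fintype.card V - 1) + 1) :=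
      (Fintype.equivFin V).trans (finCongr hn1.symm).symm
    let e : V ≃ Fin ((Fintype.card V - 1) + 1) := e1.trans (Equiv.swap (e1 v) 0)
    have hev : e v = 0 := by simp [e, Equiv.swap_apply_left]
    have he0 : ∀ a : V, e a = 0 ↔ a = v := by
      intro a
      constructor
      · intro ha; exact e.injective (by rw [ha, hev])
      · rintro rfl; exact hev
    refine ⟨⟨e, ?_⟩⟩
    intro a b
    rw [starG, fromRel_adj, hchar]
    constructor
    · rintro ⟨hne, h0 | h0⟩
      · exact ⟨fun hh => hne (congrArg e hh), Or.inl ((he0 a).mp h0)⟩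
      · exact ⟨fun hh => hne (congrArg e hh), Or.inr ((he0 b).mp h0)⟩
    · rintro ⟨hne, rfl | rfl⟩
      · exact ⟨fun hh => hne (e.injective hh), Or.inl hev⟩
      · exact ⟨fun hh => hne (e.injective hh), Or.inr hev⟩
  · -- uniqueness of the max degree vertex
    intro hcard2 y hy
    have h2n : 1 < Fintype.card V := Fintype.one_lt_card_iff.mpr ⟨y, v, hy⟩
    have h3n : 3 ≤ Fintype.card V := by omega
    rw [hleaf y hy]
    omega
end

section
/- For every t ≥ 1, the generalized Mycielskian μ_t(K_2) is isomorphic to the cycle C_{2t+3}. -/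
open SimpleGraph

lemma sub_val_eq_one {n a b : ℕ} (hn : 2 ≤ n) (ha : a < n) (hb : b < n) :
    (n - b + a) % n = 1 ↔ (b + 1 < n ∧ a = b + 1) ∨ (b + 1 = n ∧ a = 0) := by
  have key : (n - b + a) % n = if n - b + a < n then n - b + a else n - b + a - n := by
    split
    · exact Nat.mod_eq_of_lt ‹_›
    · rw [Nat.mod_eq_sub_mod (by omega), Nat.mod_eq_of_lt (by omega)]
  rw [key]
  split <;> omega

lemma cyc_adj_nat {n : ℕ} (hn : 2 ≤ n) {u v : Fin n} :
    (SimpleGraph.cycleGraph n).Adj u v ↔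
      ((v.val + 1 < n ∧ u.val = v.val + 1) ∨ (v.val + 1 = n ∧ u.val = 0)) ∨
      ((u.val + 1 < n ∧ v.val = u.val + 1) ∨ (u.val + 1 = n ∧ v.val = 0)) := by
  have h1 : (u - v).val = (n - v.val + u.val) % n := by rw [Fin.sub_def]
  have h2 : (v - u).val = (n - u.val + v.val) % n := by rw [Fin.sub_def]
  rw [SimpleGraph.cycleGraph_adj', h1, h2, sub_val_eq_one hn u.isLt v.isLt,
    sub_val_eq_one hn v.isLt u.isLt]

def fwd (t : ℕ) : Option (Fin (t + 1) × Fin 2) → Fin (2 * t + 3)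
  | none => ⟨t + 1, by omega⟩
  | some (s, i) =>
      if i.val = s.val % 2 then ⟨s.val, by have := s.isLt; omega⟩
      else ⟨2 * t + 2 - s.val, by have := s.isLt; omega⟩

def bwd (t : ℕ) (k : Fin (2 * t + 3)) : Option (Fin (t + 1) × Fin 2) :=
  if h1 : k.val = t + 1 then none
  else if h2 : k.val ≤ t then some (⟨k.val, by omega⟩, ⟨k.val % 2, by omega⟩)
  else some (⟨2 * t + 2 - k.val, by have := k.isLt; omega⟩,
    ⟨(2 * t + 2 - k.val + 1) % 2, by omega⟩)

lemma fwd_none (t : ℕ) : (fwd t none).val = t + 1 := rfl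

lemma fwd_some (t : ℕ) (s : Fin (t + 1)) (i : Fin 2) :
    (fwd t (some (s, i))).val =
      if i.val = s.val % 2 then s.val else 2 * t + 2 - s.val := by
  simp only [fwd]
  split <;> rfl

lemma left_inv' (t : ℕ) : Function.LeftInverse (bwd t) (fwd t) := by
  rintro (_ | ⟨s, i⟩)
  · rw [bwd, dif_pos (fwd_none t)]
  · have hs := s.isLt
    have hi := i.isLt
    have hk := fwd_some t s i
    by_cases hc : i.val = s.val % 2
    · rw [if_pos hc] at hk
      rw [bwd, dif_neg (by omega), dif_pos (by omega)]
      exact congrArg some (Prod.ext (Fin.ext (by simpa using hk))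
        (Fin.ext (by simp only [Fin.val_mk]; omega)))
    · rw [if_neg hc] at hk
      rw [bwd, dif_neg (by omega), dif_neg (by omega)]
      exact congrArg some (Prod.ext (Fin.ext (by simp only [Fin.val_mk]; omega))
        (Fin.ext (by simp only [Fin.val_mk]; omega)))

lemma right_inv' (t : ℕ) : Function.RightInverse (bwd t) (fwd t) := by
  intro k
  have hk := k.isLt
  rw [bwd]
  split_ifs with h1 h2
  · exact Fin.ext (by rw [fwd_none]; omega)
  · refine Fin.ext ?_
    rw [fwd_some]
    simp only [Fin.val_mk]
    split_ifs <;> omega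
  · refine Fin.ext ?_
    rw [fwd_some]
    simp only [Fin.val_mk]
    split_ifs <;> omega

set_option maxHeartbeats 1000000 in
theorem stmt_10 (t : ℕ) (ht : 1 ≤ t) :
    Nonempty (genMyc (⊤ : SimpleGraph (Fin 2)) t ≃g
      SimpleGraph.cycleGraph (2 * t + 3)) := by
  refine ⟨⟨⟨fwd t, bwd t, left_inv' t, right_inv' t⟩, ?_⟩⟩
  rintro (_ | ⟨s, i⟩) (_ | ⟨s', j⟩) <;>
    simp only [Equiv.coe_fn_mk] <;>
    rw [cyc_adj_nat (by omega : 2 ≤ 2 * t + 3)] <;>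
    simp only [genMyc, SimpleGraph.fromRel_adj, SimpleGraph.top_adj, ne_eq, fwd_none,
      Option.some.injEq, Prod.mk.injEq, Fin.ext_iff, reduceCtorEq, not_false_eq_true,
      true_and, false_or, or_false, not_true_eq_false, false_and, iff_false, not_or,
      and_false, and_true]
  · omega
  · have hs' := s'.isLt; have hj := j.isLt
    have h := fwd_some t s' j
    split_ifs at h <;> rw [h] <;> clear h <;> constructor <;> intro h0 <;> omega
  · have hs := s.isLt; have hi := i.isLt
    have h := fwd_some t s i
    split_ifs at h <;> rw [h] <;> clear h <;> constructor <;> intro h0 <;> omega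
  · have hs := s.isLt; have hi := i.isLt
    have hs' := s'.isLt; have hj := j.isLt
    have h := fwd_some t s i
    have h' := fwd_some t s' j
    split_ifs at h h' <;> rw [h, h'] <;> clear h h' <;> constructor <;> intro h0 <;> omega
end

section
/- For every m ≥ 2 and t ≥ 1, the distinguishing number of the generalized Mycielskian of the star satisfies dist(μ_t(K_{1,m})) = m. -/
/-!
The leaves of one level of `μ_t(K_{1,m})` are twins (they have the same neighbourhood), and
swapping two twins is an automorphism, so a distinguishing colouring gives the `m` leaves of a
level `m` distinct colours.

Conversely, colour leaf `i` of every level by `i - 1`, the centres by `0` and the root by `1`.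
Automorphisms preserve the number of neighbours, so they map leaves (two neighbours) to leaves
and centres and root (at least three) among themselves; the colour then fixes the root and
preserves the index of each leaf. Since a leaf of level `s` is adjacent exactly to the centres of
levels `s ± 1` (the root playing the centre of level `t + 1`), once everything above level `s` is
fixed so are the centre and the leaves of level `s`: downward induction on the level.
-/

open SimpleGraph

namespace SimpleGraph

variable {V W : Type*} {G : SimpleGraph V} {G' : SimpleGraph W}

lemma Iso.encard_neighborSet (φ : G ≃g G') (v : V) :
    (G'.neighborSet (φ v)).encard = (G.neighborSet v).encard := by
  rw [← φ.image_neighborSet, φ.injective.encard_image]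

lemma three_le_encard_neighborSet {v x y z : V} (hx : G.Adj v x) (hy : G.Adj v y)
    (hz : G.Adj v z) (hxy : x ≠ y) (hxz : x ≠ z) (hyz : y ≠ z) :
    3 ≤ (G.neighborSet v).encard := by
  rw [← Set.encard_eq_three.2 ⟨x, y, z, hxy, hxz, hyz, rfl⟩]
  exact Set.encard_le_encard (by simp [Set.insert_subset_iff, hx, hy, hz])

lemma Iso.apply_eq_self_of_neighborSet_subset_pair (φ : G ≃g G) {u a b : V} (hu : φ u = u)
    (hb : φ b = b) (hab : a ≠ b) (hua : G.Adj u a) (hN : G.neighborSet u ⊆ {a, b}) :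
    φ a = a := by
  have hφa : φ a ∈ G.neighborSet u := by simpa [hu] using φ.map_rel_iff.2 hua
  rcases hN hφa with h | h
  · exact h
  · exact absurd (φ.injective (h.trans hb.symm)) hab

lemma adj_swap_iff_of_neighborSet_eq [DecidableEq V] {a b : V}
    (h : G.neighborSet a = G.neighborSet b) (x y : V) :
    G.Adj (Equiv.swap a b x) (Equiv.swap a b y) ↔ G.Adj x y := by
  have hN : ∀ z, G.Adj a z ↔ G.Adj b z := fun z => Set.ext_iff.1 h z
  by_cases hxa : x = a <;> by_cases hxb : x = b <;> by_cases hya : y = a <;>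
    by_cases hyb : y = b <;>
    simp_all [Equiv.swap_apply_of_ne_of_ne, G.adj_comm]

def twinSwap [DecidableEq V] {a b : V} (h : G.neighborSet a = G.neighborSet b) : G ≃g G :=
  ⟨Equiv.swap a b, adj_swap_iff_of_neighborSet_eq h _ _⟩

end SimpleGraph

open SimpleGraph

lemma IsDistinguishing.apply_ne_of_neighborSet_eq {V : Type*} {G : SimpleGraph V} {d : ℕ}
    {c : V → Fin d} (hc : IsDistinguishing G d c) {a b : V} (hab : a ≠ b)
    (h : G.neighborSet a = G.neighborSet b) : c a ≠ c b := by
  classical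
  intro hcab
  have hfix := hc (twinSwap h) (fun v => by
    by_cases hva : v = a
    · simp [twinSwap, hva, hcab]
    by_cases hvb : v = b
    · simp [twinSwap, hvb, hcab]
    · simp [twinSwap, Equiv.swap_apply_of_ne_of_ne hva hvb]) a
  exact hab (by simpa [twinSwap] using hfix.symm)

namespace StarMycielskian

variable {m t : ℕ}

/- Centres and root are indexed together: `hub m t k` is the centre of level `k` for `k ≤ t` and
the root for `k = t + 1`. The leaves of level `s` are adjacent exactly to `hub (s - 1)` and
`hub (s + 1)`; the truncation `0 - 1 = 0` accounts for the edges inside level `0`. -/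
def hub (m t k : ℕ) : Option (Fin (t + 1) × Fin (m + 1)) :=
  if h : k ≤ t then some (⟨k, Nat.lt_succ_of_le h⟩, 0) else none

def level (v : Option (Fin (t + 1) × Fin (m + 1))) : ℕ :=
  v.elim (t + 1) fun p => p.1

lemma hub_coe (s : Fin (t + 1)) : hub m t s = some (s, 0) := by
  simp [hub, s.is_le]

lemma hub_of_lt {k : ℕ} (hk : t < k) : hub m t k = none := by
  simp [hub, hk.not_ge]

lemma hub_inj {k l : ℕ} (hk : k ≤ t + 1) (hl : l ≤ t + 1) :
    hub m t k = hub m t l ↔ k = l := by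
  unfold hub
  split_ifs <;> simp [Fin.ext_iff] <;> omega

lemma level_hub {k : ℕ} (hk : k ≤ t + 1) : level (hub m t k) = k := by
  unfold hub level
  split_ifs <;> simp; omega

lemma neighborSet_leaf {s : Fin (t + 1)} {i : Fin (m + 1)} (hi : i ≠ 0) :
    (genMyc (starG m) t).neighborSet (some (s, i)) = {hub m t (s - 1), hub m t (s + 1)} := by
  ext x
  rcases x with _ | ⟨s', j⟩
  · simp [genMyc, fromRel_adj, hub]
    omega
  · simp only [mem_neighborSet, genMyc, starG, fromRel_adj, hub]
    obtain rfl | hj := eq_or_ne j 0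
    · split_ifs <;> simp [hi, hi.symm] <;> simp only [Fin.ext_iff, Fin.val_zero] <;> omega
    · split_ifs <;> simp [hi, hj]

lemma adj_leaf_iff {s : Fin (t + 1)} {i : Fin (m + 1)} (hi : i ≠ 0)
    {x : Option (Fin (t + 1) × Fin (m + 1))} :
    (genMyc (starG m) t).Adj (some (s, i)) x ↔ x = hub m t (s - 1) ∨ x = hub m t (s + 1) := by
  rw [← mem_neighborSet, neighborSet_leaf hi]
  rfl

lemma hub_adj_leaf {k : ℕ} {s : Fin (t + 1)} {i : Fin (m + 1)} (hi : i ≠ 0)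
    (hk : k = s - 1 ∨ k = s + 1) : (genMyc (starG m) t).Adj (hub m t k) (some (s, i)) := by
  rcases hk with rfl | rfl <;> simp [adj_leaf_iff hi, (genMyc (starG m) t).adj_comm (hub m t _)]

lemma hub_adj_root_iff {k : ℕ} (hk : k ≤ t + 1) :
    (genMyc (starG m) t).Adj (hub m t k) none ↔ k = t := by
  unfold hub
  split_ifs <;> simp [genMyc, fromRel_adj]
  omega

lemma encard_neighborSet_leaf_le_two {s : Fin (t + 1)} {i : Fin (m + 1)} (hi : i ≠ 0) :
    ((genMyc (starG m) t).neighborSet (some (s, i))).encard ≤ 2 := by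
  rw [neighborSet_leaf hi]
  exact (Set.encard_insert_le _ _).trans (by norm_num)

lemma three_le_encard_neighborSet_hub (hm : 2 ≤ m) {k : ℕ} (hk : k ≤ t + 1) :
    3 ≤ ((genMyc (starG m) t).neighborSet (hub m t k)).encard := by
  set s : Fin (t + 1) := ⟨k - 1, by omega⟩
  have hks : k = s - 1 ∨ k = s + 1 := by simp [s]; omega
  have h1 : (⟨1, by omega⟩ : Fin (m + 1)) ≠ 0 := by simp [Fin.ext_iff]
  have h2 : (⟨2, by omega⟩ : Fin (m + 1)) ≠ 0 := by simp [Fin.ext_iff]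
  have h12 : (⟨1, by omega⟩ : Fin (m + 1)) ≠ ⟨2, by omega⟩ := by simp
  obtain hkt | rfl | rfl : k < t ∨ k = t ∨ k = t + 1 := by omega
  · have hz : k = (k + 1 : ℕ) - 1 ∨ k = k + 1 + 1 := by omega
    refine three_le_encard_neighborSet (hub_adj_leaf h1 hks) (hub_adj_leaf h2 hks)
      (hub_adj_leaf (s := ⟨k + 1, by omega⟩) h1 hz) (by simp) ?_ ?_ <;> simp [s]
  · refine three_le_encard_neighborSet (hub_adj_leaf h1 hks) (hub_adj_leaf h2 hks)
      ((hub_adj_root_iff k.le_succ).2 rfl) (by simp) ?_ ?_ <;> simp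
  · have hroot : (genMyc (starG m) t).Adj (hub m t (t + 1)) (hub m t t) := by
      rw [hub_of_lt (lt_add_one t)]
      exact ((hub_adj_root_iff t.le_succ).2 rfl).symm
    refine three_le_encard_neighborSet (hub_adj_leaf h1 hks) (hub_adj_leaf h2 hks) hroot
      (by simp) ?_ ?_ <;> simp [hub]

def IsLeaf (v : Option (Fin (t + 1) × Fin (m + 1))) : Prop :=
  ∃ s i, i ≠ 0 ∧ v = some (s, i)

lemma not_isLeaf_hub {k : ℕ} : ¬ IsLeaf (hub m t k) := by
  rintro ⟨s, i, hi, h⟩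
  unfold hub at h
  split_ifs at h
  simp_all

lemma exists_eq_hub_of_not_isLeaf {v : Option (Fin (t + 1) × Fin (m + 1))} (hv : ¬ IsLeaf v) :
    ∃ k ≤ t + 1, v = hub m t k := by
  rcases v with _ | ⟨s, i⟩
  · exact ⟨t + 1, le_rfl, (hub_of_lt (lt_add_one t)).symm⟩
  · obtain rfl : i = 0 := by_contra fun hi => hv ⟨s, i, hi, rfl⟩
    exact ⟨s, by omega, (hub_coe s).symm⟩

lemma isLeaf_iff_encard_neighborSet_le_two (hm : 2 ≤ m)
    {v : Option (Fin (t + 1) × Fin (m + 1))} :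
    IsLeaf v ↔ ((genMyc (starG m) t).neighborSet v).encard ≤ 2 := by
  refine ⟨fun ⟨s, i, hi, hv⟩ => hv ▸ encard_neighborSet_leaf_le_two hi, fun h => ?_⟩
  by_contra hv
  obtain ⟨k, hk, rfl⟩ := exists_eq_hub_of_not_isLeaf hv
  have := (three_le_encard_neighborSet_hub hm hk).trans h
  norm_num at this

lemma isLeaf_apply_iff (hm : 2 ≤ m) (φ : genMyc (starG m) t ≃g genMyc (starG m) t)
    (v : Option (Fin (t + 1) × Fin (m + 1))) : IsLeaf (φ v) ↔ IsLeaf v := by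
  rw [isLeaf_iff_encard_neighborSet_le_two hm, isLeaf_iff_encard_neighborSet_le_two hm,
    φ.encard_neighborSet]

def leafColoring (hm : 2 ≤ m) (v : Option (Fin (t + 1) × Fin (m + 1))) : Fin m :=
  v.elim ⟨1, hm⟩ fun p => ⟨p.2 - 1, by omega⟩

section Automorphism

variable {φ : genMyc (starG m) t ≃g genMyc (starG m) t}

lemma apply_none_eq_none (hm : 2 ≤ m) (hφ : ∀ v, leafColoring hm (φ v) = leafColoring hm v) :
    φ none = none := by
  rcases hv : φ none with _ | ⟨s, i⟩
  · rfl
  · obtain rfl : i = 0 := by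
      by_contra hi
      obtain ⟨_, _, _, h⟩ := (isLeaf_apply_iff hm φ none).1 (hv ▸ ⟨s, i, hi, rfl⟩)
      cases h
    simpa [hv, leafColoring] using hφ none

lemma exists_apply_leaf_eq_leaf (hm : 2 ≤ m)
    (hφ : ∀ v, leafColoring hm (φ v) = leafColoring hm v) {s : Fin (t + 1)} {i : Fin (m + 1)}
    (hi : i ≠ 0) : ∃ s', φ (some (s, i)) = some (s', i) := by
  obtain ⟨s', j, hj, h⟩ := (isLeaf_apply_iff hm φ _).2 ⟨s, i, hi, rfl⟩
  have hc := hφ (some (s, i))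
  simp only [h, leafColoring, Option.elim, Fin.mk.injEq] at hc
  have := Fin.val_ne_zero_iff.2 hi
  have := Fin.val_ne_zero_iff.2 hj
  exact ⟨s', by rw [h, Fin.ext (by omega : (j : ℕ) = i)]⟩

lemma apply_leaf_eq_of_fixed_above (hm : 2 ≤ m)
    (hφ : ∀ v, leafColoring hm (φ v) = leafColoring hm v) {s : Fin (t + 1)} {i : Fin (m + 1)}
    (hi : i ≠ 0) (hfix : ∀ v, s + 1 ≤ level v → φ v = v) :
    φ (some (s, i)) = some (s, i) := by
  obtain ⟨s', h⟩ := exists_apply_leaf_eq_leaf hm hφ hi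
  have hup : φ (hub m t (s + 1)) = hub m t (s + 1) := hfix _ (by rw [level_hub (by omega)])
  have hadj : (genMyc (starG m) t).Adj (some (s', i)) (hub m t (s + 1)) := by
    have := φ.map_rel_iff.2 ((adj_leaf_iff (s := s) hi).2 (Or.inr rfl))
    rwa [h, hup] at this
  rw [adj_leaf_iff hi, hub_inj (by omega) (by omega), hub_inj (by omega) (by omega)] at hadj
  rcases hadj with hs' | hs'
  · have hfix' := hfix (some (s', i)) (by simp [level]; omega)
    refine absurd (φ.injective (h.trans hfix'.symm)) ?_
    simp only [Option.some.injEq, Prod.mk.injEq, Fin.ext_iff]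
    omega
  · rw [h, Fin.ext (by omega : (s' : ℕ) = s)]

lemma apply_center_eq_of_fixed_above (hm : 2 ≤ m)
    (hφ : ∀ v, leafColoring hm (φ v) = leafColoring hm v) {s : Fin (t + 1)}
    (hfix : ∀ v, s + 1 ≤ level v → φ v = v) : φ (some (s, 0)) = some (s, 0) := by
  rw [← hub_coe]
  obtain hst | hst := s.is_le.lt_or_eq
  · set u : Option (Fin (t + 1) × Fin (m + 1)) := some (⟨s + 1, by omega⟩, ⟨1, by omega⟩)
    have h1 : (⟨1, by omega⟩ : Fin (m + 1)) ≠ 0 := by simp [Fin.ext_iff]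
    refine φ.apply_eq_self_of_neighborSet_subset_pair (u := u) (b := hub m t (s + 2))
      (hfix u (by simp [u, level])) (hfix _ (by rw [level_hub (by omega)]; omega))
      (by rw [Ne, hub_inj (by omega) (by omega)]; omega)
      (by simp [u, adj_leaf_iff h1]) (by simp [u, neighborSet_leaf h1])
  · have hadj : (genMyc (starG m) t).Adj (φ (hub m t s)) none := by
      have := φ.map_rel_iff.2 ((hub_adj_root_iff (m := m) (by omega)).2 hst)
      rwa [apply_none_eq_none hm hφ] at this
    obtain ⟨k, hk, hφk⟩ :=
      exists_eq_hub_of_not_isLeaf ((isLeaf_apply_iff hm φ _).not.2 not_isLeaf_hub)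
    rw [hφk, hub_adj_root_iff hk] at hadj
    rw [hφk, hadj, hst]

lemma apply_eq_self_of_le_level (hm : 2 ≤ m)
    (hφ : ∀ v, leafColoring hm (φ v) = leafColoring hm v) {k : ℕ} (hk : k ≤ t + 1) :
    ∀ v, k ≤ level v → φ v = v := by
  induction hk using Nat.decreasingInduction with
  | self =>
    rintro (_ | ⟨s, i⟩) hv
    · exact apply_none_eq_none hm hφ
    · simp [level] at hv
      omega
  | of_succ k hk ih =>
    rintro (_ | ⟨s, i⟩) hv
    · exact apply_none_eq_none hm hφ
    obtain hks | hks := (show k ≤ s from hv).eq_or_lt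
    · have hfix : ∀ v, (s : ℕ) + 1 ≤ level v → φ v = v := hks ▸ ih
      obtain rfl | hi := eq_or_ne i 0
      · exact apply_center_eq_of_fixed_above hm hφ hfix
      · exact apply_leaf_eq_of_fixed_above hm hφ hi hfix
    · exact ih _ hks

end Automorphism

theorem isDistinguishing_leafColoring (hm : 2 ≤ m) :
    IsDistinguishing (genMyc (starG m) t) m (leafColoring hm) :=
  fun _ hφ v => apply_eq_self_of_le_level hm hφ (Nat.zero_le _) v (Nat.zero_le _)

theorem le_of_isDistinguishing {d : ℕ} {c : Option (Fin (t + 1) × Fin (m + 1)) → Fin d}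
    (hc : IsDistinguishing (genMyc (starG m) t) d c) : m ≤ d := by
  have hinj : Function.Injective fun k : Fin m => c (some (0, k.succ)) := by
    intro k l hkl
    by_contra hne
    refine hc.apply_ne_of_neighborSet_eq (by simpa using hne) ?_ hkl
    rw [neighborSet_leaf k.succ_ne_zero, neighborSet_leaf l.succ_ne_zero]
  simpa using Fintype.card_le_of_injective _ hinj

end StarMycielskian

theorem stmt_15_general (m t : ℕ) (hm : 2 ≤ m) :
    distNum (genMyc (starG m) t) = m :=
  le_antisymm (Nat.sInf_le ⟨_, StarMycielskian.isDistinguishing_leafColoring hm⟩)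
    (le_csInf ⟨m, _, StarMycielskian.isDistinguishing_leafColoring hm⟩
      fun _ ⟨_, hc⟩ => StarMycielskian.le_of_isDistinguishing hc)

theorem stmt_15 (m t : ℕ) (hm : 2 ≤ m) (ht : 1 ≤ t) :
    distNum (genMyc (starG m) t) = m :=
  stmt_15_general m t hm
end

section
/- In μ_t(K_n) with n ≥ 3, for each 1 ≤ s ≤ t and each 1 ≤ i ≤ n, the vertex u_i^{s−1} is the unique non-neighbor of u_i^s among the level-(s−1) vertices. Consequently, if an automorphism of μ_t(K_n) fixes the root and each level setwise, and maps u_i^{s̄} to u_j^{s̄} for some level s̄, then it maps u_i^s to u_j^s for every level 0 ≤ s ≤ t. -/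
open SimpleGraph

lemma key (n t : ℕ) (s : ℕ) (hs : s + 1 ≤ t) (i j : Fin n) :
    ¬ (genMyc (⊤ : SimpleGraph (Fin n)) t).Adj
        (some (⟨s + 1, by omega⟩, i)) (some (⟨s, by omega⟩, j)) ↔ j = i := by
  rw [genMyc, SimpleGraph.fromRel_adj]
  simp only [ne_eq, Option.some.injEq, Prod.mk.injEq, top_adj, Fin.mk.injEq]
  constructor
  · intro h
    by_contra hji
    exact h ⟨fun ⟨h1, _⟩ => by omega, Or.inr (Or.inr ⟨trivial, hji⟩)⟩
  · rintro rfl ⟨_, h⟩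
    rcases h with (⟨h1, _⟩ | ⟨h1, _⟩) | (⟨h1, _⟩ | ⟨_, h2⟩) <;> omega
theorem stmt_17 (n t : ℕ) (hn : 3 ≤ n) (ht : 1 ≤ t) :
    (∀ (s : ℕ) (hs : s + 1 ≤ t) (i j : Fin n),
      (¬ (genMyc (⊤ : SimpleGraph (Fin n)) t).Adj
          (some (⟨s + 1, by omega⟩, i)) (some (⟨s, by omega⟩, j)) ↔ j = i)) ∧
    (∀ φ : genMyc (⊤ : SimpleGraph (Fin n)) t ≃g genMyc (⊤ : SimpleGraph (Fin n)) t,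
      φ none = none →
      (∀ (s : Fin (t + 1)) (i : Fin n), ∃ j : Fin n, φ (some (s, i)) = some (s, j)) →
      ∀ (s0 : Fin (t + 1)) (i j : Fin n), φ (some (s0, i)) = some (s0, j) →
        ∀ s : Fin (t + 1), φ (some (s, i)) = some (s, j)) := by
  refine ⟨fun s hs i j => key n t s hs i j, ?_⟩
  intro φ _ hlev s0 i j h0 s
  have step : ∀ (s : ℕ) (hs : s + 1 ≤ t),
      (φ (some (⟨s, by omega⟩, i)) = some (⟨s, by omega⟩, j)) ↔
      (φ (some (⟨s + 1, by omega⟩, i)) = some (⟨s + 1, by omega⟩, j)) := by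
    intro s hs
    obtain ⟨k, hk⟩ := hlev ⟨s, by omega⟩ i
    obtain ⟨k', hk'⟩ := hlev ⟨s + 1, by omega⟩ i
    have hna : ¬ (genMyc (⊤ : SimpleGraph (Fin n)) t).Adj
        (some (⟨s + 1, by omega⟩, i)) (some (⟨s, by omega⟩, i)) :=
      (key n t s hs i i).mpr rfl
    have hna' : ¬ (genMyc (⊤ : SimpleGraph (Fin n)) t).Adj
        (φ (some (⟨s + 1, by omega⟩, i))) (φ (some (⟨s, by omega⟩, i))) := by
      rw [φ.map_adj_iff]; exact hna
    rw [hk, hk'] at hna'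
    have hkk : k = k' := (key n t s hs k' k).mp hna'
    constructor
    · intro h
      have : k = j := by
        rw [hk] at h
        simpa using h
      rw [hk', ← hkk, this]
    · intro h
      have : k' = j := by
        rw [hk'] at h
        simpa using h
      rw [hk, hkk, this]
  have all : ∀ (s : ℕ) (hs : s ≤ t),
      (φ (some (⟨s, by omega⟩, i)) = some (⟨s, by omega⟩, j)) ↔
      (φ (some (⟨0, by omega⟩, i)) = some (⟨0, by omega⟩, j)) := by
    intro s
    induction s with
    | zero => exact fun _ => Iff.rfl
    | succ s ih => exact fun hs => (step s hs).symm.trans (ih (by omega))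
  have base := (all s0.val (by omega)).mp h0
  exact (all s.val (by omega)).mpr base
end
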